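/- Let M ⊆ ℝ² be a closed set and let x ∈ M ∩ ∂M. Suppose that for every unit vector v ∈ S¹ there exists i ∈ {1, 2, 3} such that M is of type 𝒯^i at x in direction v. Then the set of unit vectors v ∈ S¹ at which M is of type 𝒯³ at x in direction v is finite. -/

import Mathlib

/-!
If `M` is of type `𝒯³` at `x` in direction `v`, then `∂M` contains a curve `γ_{x,v}(t, f t)`
leaving `x` with velocity `v`, so `v` lies in the positive tangent cone of `∂M` at `x`.
On the other hand, if `M` is of type `𝒯¹`, `𝒯²` or `𝒯³` in direction `v₀`, no direction
`v ≠ v₀` close to `v₀` is tangent to `∂M`: near `x` the cone `A^{2u}(x, v₀)` meets `∂M` only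
at `x` (for `𝒯¹`, as `M` is closed, and for `𝒯²`, as the open cone lies in the interior of `M`),
or only along graphs tangent to `v₀` (for `𝒯³`). So the tangent unit vectors form a discrete
subset of the compact unit circle, hence a finite one.
-/

open Set
open scoped RealInnerProductSpace

/-- The rotation of `v ∈ ℝ²` by `+90°`. -/
noncomputable def rot90 (v : EuclideanSpace ℝ (Fin 2)) : EuclideanSpace ℝ (Fin 2) :=
  !₂[-(v 1), v 0]

/-- For `z ∈ ℝ²` and a unit vector `v`, the unique orientation-preserving isometry `γ_{z,v}`
of `ℝ²` mapping `0` to `z` and `(1,0)` to `z + v`. -/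
noncomputable def gammaMap (z v : EuclideanSpace ℝ (Fin 2)) :
    EuclideanSpace ℝ (Fin 2) → EuclideanSpace ℝ (Fin 2) :=
  fun p => z + p 0 • v + p 1 • rot90 v

/-- The cone `A_r^u = {(x,y) : 0 ≤ x < r, −xu ≤ y ≤ xu}`. -/
def coneSet (r u : ℝ) : Set (EuclideanSpace ℝ (Fin 2)) :=
  {p | 0 ≤ p 0 ∧ p 0 < r ∧ -(p 0 * u) ≤ p 1 ∧ p 1 ≤ p 0 * u}

/-- `f` is DCR on the set `J ⊆ ℝ`: it agrees on `J` with a difference of two convex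
functions defined on an open interval containing `J`. -/
def IsDCROn (f : ℝ → ℝ) (J : Set ℝ) : Prop :=
  ∃ (O : Set ℝ) (g h : ℝ → ℝ), IsOpen O ∧ Convex ℝ O ∧ J ⊆ O ∧
    ConvexOn ℝ O g ∧ ConvexOn ℝ O h ∧ ∀ x ∈ J, f x = g x - h x

/-- The graph of `f` over `[0, r)`, as a subset of `ℝ²`. -/
def graphOn (f : ℝ → ℝ) (r : ℝ) : Set (EuclideanSpace ℝ (Fin 2)) :=
  (fun x => (!₂[x, f x] : EuclideanSpace ℝ (Fin 2))) '' Ico 0 r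

/-- The hypograph `{(x,y) : x ∈ [0,r), y ≤ f x}`. -/
def hypOn (f : ℝ → ℝ) (r : ℝ) : Set (EuclideanSpace ℝ (Fin 2)) :=
  {p | p 0 ∈ Ico 0 r ∧ p 1 ≤ f (p 0)}

/-- The epigraph `{(x,y) : x ∈ [0,r), y ≥ f x}`. -/
def epiOn (f : ℝ → ℝ) (r : ℝ) : Set (EuclideanSpace ℝ (Fin 2)) :=
  {p | p 0 ∈ Ico 0 r ∧ f (p 0) ≤ p 1}

/-- `M` is a `T¹_{r,u}`-set. -/
def IsT1Set (M : Set (EuclideanSpace ℝ (Fin 2))) (r u : ℝ) : Prop :=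
  M ∩ coneSet r (2 * u) = {0}

/-- `M` is a `T²_{r,u}`-set. -/
def IsT2Set (M : Set (EuclideanSpace ℝ (Fin 2))) (r u : ℝ) : Prop :=
  coneSet r (2 * u) ⊆ M

/-- `M` is a `T³_{r,u}`-set. -/
def IsT3Set (M : Set (EuclideanSpace ℝ (Fin 2))) (r u : ℝ) : Prop :=
  ∃ U : ℝ → ℝ, IsDCROn U (Ico 0 r) ∧ HasDerivWithinAt U 0 (Ici 0) 0 ∧
    graphOn U r ⊆ coneSet r u ∧ M ∩ coneSet r (2 * u) = hypOn U r ∩ coneSet r (2 * u)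

/-- `M` is a `T⁴_{r,u}`-set. -/
def IsT4Set (M : Set (EuclideanSpace ℝ (Fin 2))) (r u : ℝ) : Prop :=
  ∃ L : ℝ → ℝ, IsDCROn L (Ico 0 r) ∧ HasDerivWithinAt L 0 (Ici 0) 0 ∧
    graphOn L r ⊆ coneSet r u ∧ M ∩ coneSet r (2 * u) = epiOn L r ∩ coneSet r (2 * u)

/-- `M` is a `T⁵_{r,u}`-set. -/
def IsT5Set (M : Set (EuclideanSpace ℝ (Fin 2))) (r u : ℝ) : Prop :=
  ∃ U L : ℝ → ℝ, IsDCROn U (Ico 0 r) ∧ IsDCROn L (Ico 0 r) ∧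
    (∀ x ∈ Ico 0 r, L x ≤ U x) ∧
    HasDerivWithinAt U 0 (Ici 0) 0 ∧ HasDerivWithinAt L 0 (Ici 0) 0 ∧
    graphOn U r ⊆ coneSet r u ∧ graphOn L r ⊆ coneSet r u ∧
    M ∩ coneSet r (2 * u) = hypOn U r ∩ epiOn L r

/-- `M` is a `𝒯³_{r,u}`-set. -/
def IsTT3Set (M : Set (EuclideanSpace ℝ (Fin 2))) (r u : ℝ) : Prop :=
  frontier M ∩ coneSet r (2 * u) ⊆ coneSet r u ∧
  ∃ (n : ℕ) (f : ℕ → ℝ → ℝ),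
    (∀ i < n, IsDCROn (f i) (Ico 0 r) ∧ HasDerivWithinAt (f i) 0 (Ici 0) 0) ∧
    (∀ i, i + 1 < n → ∀ x ∈ Ico 0 r, f i x ≤ f (i + 1) x) ∧
    frontier M ∩ coneSet r u = ⋃ i ∈ Finset.range n, graphOn (f i) r ∧
    (∀ i, i + 1 < n → (∃ x ∈ Ioo 0 r, f i x = f (i + 1) x) →
      {p : EuclideanSpace ℝ (Fin 2) |
        p 0 ∈ Ico 0 r ∧ f i (p 0) ≤ p 1 ∧ p 1 ≤ f (i + 1) (p 0)} ⊆ M)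

/-- `M` is of type `T¹` at `x` in direction `v`. -/
def OfTypeT1 (M : Set (EuclideanSpace ℝ (Fin 2))) (x v : EuclideanSpace ℝ (Fin 2)) : Prop :=
  ∃ r u : ℝ, 0 < r ∧ 0 < u ∧ IsT1Set (gammaMap x v ⁻¹' M) r u

/-- `M` is of type `T²` at `x` in direction `v`. -/
def OfTypeT2 (M : Set (EuclideanSpace ℝ (Fin 2))) (x v : EuclideanSpace ℝ (Fin 2)) : Prop :=
  ∃ r u : ℝ, 0 < r ∧ 0 < u ∧ IsT2Set (gammaMap x v ⁻¹' M) r u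

/-- `M` is of type `T³` at `x` in direction `v`. -/
def OfTypeT3 (M : Set (EuclideanSpace ℝ (Fin 2))) (x v : EuclideanSpace ℝ (Fin 2)) : Prop :=
  ∃ r u : ℝ, 0 < r ∧ 0 < u ∧ IsT3Set (gammaMap x v ⁻¹' M) r u

/-- `M` is of type `T⁴` at `x` in direction `v`. -/
def OfTypeT4 (M : Set (EuclideanSpace ℝ (Fin 2))) (x v : EuclideanSpace ℝ (Fin 2)) : Prop :=
  ∃ r u : ℝ, 0 < r ∧ 0 < u ∧ IsT4Set (gammaMap x v ⁻¹' M) r u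

/-- `M` is of type `T⁵` at `x` in direction `v`. -/
def OfTypeT5 (M : Set (EuclideanSpace ℝ (Fin 2))) (x v : EuclideanSpace ℝ (Fin 2)) : Prop :=
  ∃ r u : ℝ, 0 < r ∧ 0 < u ∧ IsT5Set (gammaMap x v ⁻¹' M) r u

/-- `M` is of type `𝒯¹` at `x` in direction `v`. -/
def OfTypeTT1 (M : Set (EuclideanSpace ℝ (Fin 2))) (x v : EuclideanSpace ℝ (Fin 2)) : Prop :=
  ∃ r u : ℝ, 0 < r ∧ 0 < u ∧ IsT1Set (gammaMap x v ⁻¹' M) r u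

/-- `M` is of type `𝒯²` at `x` in direction `v`. -/
def OfTypeTT2 (M : Set (EuclideanSpace ℝ (Fin 2))) (x v : EuclideanSpace ℝ (Fin 2)) : Prop :=
  ∃ r u : ℝ, 0 < r ∧ 0 < u ∧ IsT2Set (gammaMap x v ⁻¹' M) r u

/-- `M` is of type `𝒯³` at `x` in direction `v`. -/
def OfTypeTT3 (M : Set (EuclideanSpace ℝ (Fin 2))) (x v : EuclideanSpace ℝ (Fin 2)) : Prop :=
  ∃ r u : ℝ, 0 < r ∧ 0 < u ∧ IsTT3Set (gammaMap x v ⁻¹' M) r u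

/-- `M ⊆ ℝ²` is a DC graph. -/
def IsDCGraph (M : Set (EuclideanSpace ℝ (Fin 2))) : Prop :=
  ∃ v w : EuclideanSpace ℝ (Fin 2), ‖v‖ = 1 ∧ ‖w‖ = 1 ∧ ⟪v, w⟫ = 0 ∧
    ∃ K O : Set ℝ, IsClosed K ∧ Convex ℝ K ∧ IsOpen O ∧ Convex ℝ O ∧ K ⊆ O ∧
      ∃ g h : ℝ → ℝ, ConvexOn ℝ O g ∧ ConvexOn ℝ O h ∧
        M = (fun t => t • w + (g t - h t) • v) '' K

open Filter Topology NNReal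

local notation "E2" => EuclideanSpace ℝ (Fin 2)

lemma ext_fin_two {p q : E2} (h0 : p 0 = q 0) (h1 : p 1 = q 1) : p = q := by
  ext i; fin_cases i; exacts [h0, h1]

lemma inner_eq_fin_two (a b : E2) : ⟪a, b⟫ = a 0 * b 0 + a 1 * b 1 := by
  simp only [PiLp.inner_apply, RCLike.inner_apply, Real.ringHom_apply, Fin.sum_univ_two]
  ring

lemma sq_add_sq_eq_one {v : E2} (hv : ‖v‖ = 1) : v 0 ^ 2 + v 1 ^ 2 = 1 := by
  have := real_inner_self_eq_norm_sq v
  rw [inner_eq_fin_two, hv] at this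
  linear_combination this

@[simp] lemma rot90_apply_zero (v : E2) : rot90 v 0 = -v 1 := rfl

@[simp] lemma rot90_apply_one (v : E2) : rot90 v 1 = v 0 := rfl

lemma gammaMap_apply (x v p : E2) (i : Fin 2) :
    gammaMap x v p i = x i + p 0 * v i + p 1 * rot90 v i := rfl

/-- For a unit vector `v`, the coordinates of `d` in the orthonormal frame `(v, rot90 v)`. -/
noncomputable def frameCoords (v d : E2) : E2 :=
  !₂[⟪d, v⟫, ⟪d, rot90 v⟫]

@[simp] lemma frameCoords_apply_zero (v d : E2) : frameCoords v d 0 = ⟪d, v⟫ := rfl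

@[simp] lemma frameCoords_apply_one (v d : E2) : frameCoords v d 1 = ⟪d, rot90 v⟫ := rfl

lemma continuous_frameCoords (v : E2) : Continuous (frameCoords v) := by
  unfold frameCoords
  fun_prop

lemma continuous_gammaMap (x v : E2) : Continuous (gammaMap x v) := by
  unfold gammaMap
  fun_prop

lemma frameCoords_smul (v d : E2) (c : ℝ) : frameCoords v (c • d) = c • frameCoords v d := by
  refine ext_fin_two ?_ ?_ <;> simp [inner_smul_left]

lemma gammaMap_frameCoords {v : E2} (hv : ‖v‖ = 1) (x d : E2) :
    gammaMap x v (frameCoords v d) = x + d := by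
  have h := sq_add_sq_eq_one hv
  refine ext_fin_two ?_ ?_ <;>
    simp only [gammaMap_apply, frameCoords_apply_zero, frameCoords_apply_one, inner_eq_fin_two,
      rot90_apply_zero, rot90_apply_one, PiLp.add_apply]
  · linear_combination d 0 * h
  · linear_combination d 1 * h

lemma frameCoords_gammaMap_sub {v : E2} (hv : ‖v‖ = 1) (x p : E2) :
    frameCoords v (gammaMap x v p - x) = p := by
  have h := sq_add_sq_eq_one hv
  refine ext_fin_two ?_ ?_ <;>
    simp only [gammaMap_apply, frameCoords_apply_zero, frameCoords_apply_one, inner_eq_fin_two,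
      rot90_apply_zero, rot90_apply_one, PiLp.sub_apply]
  · linear_combination p 0 * h
  · linear_combination p 1 * h

noncomputable def gammaHomeo {v : E2} (hv : ‖v‖ = 1) (x : E2) : E2 ≃ₜ E2 where
  toFun := gammaMap x v
  invFun p := frameCoords v (p - x)
  left_inv := frameCoords_gammaMap_sub hv x
  right_inv p := by simp only [gammaMap_frameCoords hv, add_sub_cancel]
  continuous_toFun := continuous_gammaMap x v
  continuous_invFun := (continuous_frameCoords v).comp (continuous_sub_right x)

lemma frontier_preimage_gammaMap {v : E2} (hv : ‖v‖ = 1) (x : E2) (M : Set E2) :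
    frontier (gammaMap x v ⁻¹' M) = gammaMap x v ⁻¹' frontier M :=
  ((gammaHomeo hv x).preimage_frontier M).symm

lemma inner_rot90_self (v : E2) : ⟪v, rot90 v⟫ = 0 := by
  rw [inner_eq_fin_two, rot90_apply_zero, rot90_apply_one]
  ring

lemma eq_of_inner_rot90_eq_zero {v w : E2} (hv : ‖v‖ = 1) (hw : ‖w‖ = 1)
    (h : ⟪v, rot90 w⟫ = 0) (hpos : 0 < ⟪v, w⟫) : v = w := by
  have hv' := sq_add_sq_eq_one hv
  have hw' := sq_add_sq_eq_one hw
  rw [inner_eq_fin_two, rot90_apply_zero, rot90_apply_one] at h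
  rw [inner_eq_fin_two] at hpos
  -- Lagrange's identity: `⟪v, w⟫² + ⟪v, rot90 w⟫² = ‖v‖² ‖w‖² = 1`.
  have hinner : v 0 * w 0 + v 1 * w 1 = 1 := by nlinarith
  have hdist : (v 0 - w 0) ^ 2 + (v 1 - w 1) ^ 2 = 0 := by nlinarith
  exact ext_fin_two (by nlinarith [sq_nonneg (v 0 - w 0), sq_nonneg (v 1 - w 1)])
    (by nlinarith [sq_nonneg (v 0 - w 0), sq_nonneg (v 1 - w 1)])

lemma mem_posTangentConeAt_of_hasDerivWithinAt {E : Type*} [NormedAddCommGroup E]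
    [NormedSpace ℝ E] {S : Set E} {g : ℝ → E} {g' : E} {a : ℝ}
    (hg : HasDerivWithinAt g g' (Ici a) a) (hS : ∀ᶠ t in 𝓝[>] a, g t ∈ S) :
    g' ∈ posTangentConeAt S (g a) := by
  have hslope : Tendsto (slope g a) (𝓝[>] a) (𝓝 g') := by
    simpa using (hasDerivWithinAt_iff_tendsto_slope.mp hg)
  refine mem_tangentConeAt_of_seq (𝓝[>] a) (fun t => (t - a)⁻¹.toNNReal) (fun t => g t - g a)
    ?_ ?_ ?_
  · have := hg.continuousWithinAt.tendsto.mono_left (nhdsWithin_mono _ Ioi_subset_Ici_self)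
    simpa using this.sub_const (g a)
  · filter_upwards [hS] with t ht
    simpa using ht
  · refine hslope.congr' ?_
    filter_upwards [self_mem_nhdsWithin] with t (ht : a < t)
    rw [NNReal.smul_def, Real.coe_toNNReal _ (inv_nonneg.mpr (sub_nonneg.mpr ht.le)),
      slope_def_module]

lemma frequently_mem_of_mem_posTangentConeAt {E : Type*} [AddCommGroup E] [Module ℝ E]
    [TopologicalSpace E] {S K : Set E} {x v : E} (hv : v ∈ posTangentConeAt S x)
    (hK : IsOpen K) (hvK : v ∈ K) (hKcone : ∀ (c : ℝ≥0) (d : E), c • d ∈ K → d ∈ K) :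
    ∃ᶠ d in 𝓝 0, d ∈ K ∧ x + d ∈ S := by
  obtain ⟨α, l, hl, c, d, hd₀, hdS, hcd⟩ := exists_fun_of_mem_tangentConeAt hv
  refine hd₀.frequently (Eventually.frequently ?_)
  filter_upwards [hcd.eventually (hK.mem_nhds hvK), hdS] with n hn hnS
  exact ⟨hKcone _ _ hn, hnS⟩

def sector (σ κ : ℝ) : Set E2 :=
  {p | σ * p 0 < |p 1| ∧ |p 1| < κ * p 0}

lemma isOpen_sector (σ κ : ℝ) : IsOpen (sector σ κ) := by
  refine IsOpen.and (isOpen_lt ?_ ?_) (isOpen_lt ?_ ?_) <;> fun_prop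

lemma mem_sector_of_smul_mem {σ κ c : ℝ} {p : E2} (hc : 0 ≤ c) (h : c • p ∈ sector σ κ) :
    p ∈ sector σ κ := by
  simp only [sector, mem_ofPred_eq, PiLp.smul_apply, smul_eq_mul, abs_mul, abs_of_nonneg hc] at h
  rcases hc.eq_or_lt with rfl | hc
  · simp at h
  · exact ⟨lt_of_mul_lt_mul_left (by linarith) hc.le,
      lt_of_mul_lt_mul_left (by linarith) hc.le⟩

lemma sector_inter_subset_coneSet {σ κ r : ℝ} (hκ : 0 < κ) :
    sector σ κ ∩ {p | p 0 < r} ⊆ coneSet r κ := by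
  rintro p ⟨⟨-, hp⟩, hpr⟩
  have hb := abs_le.mp hp.le
  exact ⟨by nlinarith [abs_nonneg (p 1)], hpr, by linarith, by linarith⟩

lemma eventually_coord_lt {r : ℝ} (hr : 0 < r) : ∀ᶠ p : E2 in 𝓝 0, p 0 < r :=
  (by fun_prop : Continuous fun p : E2 => p 0).continuousAt.eventually_lt continuousAt_const hr

lemma zero_mem_coneSet {r u : ℝ} (hr : 0 < r) : (0 : E2) ∈ coneSet r u := by
  simp [coneSet, hr]

lemma IsTT3Set.exists_tangent_graphs {N : Set E2} {r u : ℝ} (hN : IsTT3Set N r u) (hr : 0 < r) :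
    ∃ (n : ℕ) (f : ℕ → ℝ → ℝ), (∀ i ∈ Finset.range n, f i 0 = 0 ∧
      HasDerivWithinAt (f i) 0 (Ici 0) 0 ∧ graphOn (f i) r ⊆ frontier N) ∧
      frontier N ∩ coneSet r (2 * u) ⊆ ⋃ i ∈ Finset.range n, graphOn (f i) r := by
  obtain ⟨hsub, n, f, hf, -, hgraphs, -⟩ := hN
  refine ⟨n, f, fun i hi => ?_, fun p hp => hgraphs ▸ ⟨hp.1, hsub hp⟩⟩
  have hgraph : graphOn (f i) r ⊆ frontier N ∩ coneSet r u :=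
    hgraphs ▸ subset_iUnion₂ (s := fun j (_ : j ∈ Finset.range n) => graphOn (f j) r) i hi
  have h0 := (hgraph ⟨0, ⟨le_rfl, hr⟩, rfl⟩).2
  simp only [coneSet, mem_ofPred_eq, Matrix.cons_val_zero, Matrix.cons_val_one, zero_mul,
    neg_zero] at h0
  exact ⟨le_antisymm h0.2.2.2 h0.2.2.1, (hf i (Finset.mem_range.mp hi)).2,
    hgraph.trans inter_subset_left⟩

lemma IsTT3Set.eventually_abs_le {N : Set E2} {r u σ : ℝ} (hN : IsTT3Set N r u) (hr : 0 < r)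
    (hσ : 0 < σ) :
    ∀ᶠ p in 𝓝 (0 : E2), p ∈ frontier N → p ∈ coneSet r (2 * u) → |p 1| ≤ σ * p 0 := by
  obtain ⟨n, f, hf, hcover⟩ := hN.exists_tangent_graphs hr
  have hflat : ∀ i ∈ Finset.range n, ∀ᶠ t in 𝓝[≥] (0 : ℝ), |f i t| ≤ σ * t := fun i hi => by
    obtain ⟨hf0, hderiv, -⟩ := hf i hi
    filter_upwards [(hasDerivWithinAt_iff_isLittleO.mp hderiv).def hσ, self_mem_nhdsWithin]
      with t ht (ht0 : 0 ≤ t)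
    simpa [hf0, abs_of_nonneg ht0] using ht
  have hall : ∀ᶠ t in 𝓝 (0 : ℝ), 0 ≤ t → ∀ i ∈ Finset.range n, |f i t| ≤ σ * t :=
    eventually_nhdsWithin_iff.mp ((Finset.eventually_all _).mpr hflat)
  filter_upwards [((by fun_prop : Continuous fun p : E2 => p 0).tendsto' 0 0 rfl).eventually hall]
    with p hp hpfr hpc
  obtain ⟨i, hi, t, ht, rfl⟩ := mem_iUnion₂.mp (hcover ⟨hpfr, hpc⟩)
  simpa using hp ht.1 i hi

lemma IsT1Set.not_frequently_frontier_mem_sector {N : Set E2} {r u σ : ℝ} (hNcl : IsClosed N)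
    (hN : IsT1Set N r u) (hr : 0 < r) (hu : 0 < u) :
    ¬ ∃ᶠ p in 𝓝 0, p ∈ sector σ (2 * u) ∧ p ∈ frontier N := fun hfr => by
  obtain ⟨p, ⟨hps, hpfr⟩, hpr⟩ := (hfr.and_eventually (eventually_coord_lt hr)).exists
  have hp0 : p ∈ N ∩ coneSet r (2 * u) :=
    ⟨hNcl.frontier_subset hpfr, sector_inter_subset_coneSet (by positivity) ⟨hps, hpr⟩⟩
  rw [hN, mem_singleton_iff] at hp0
  simp [hp0, sector] at hps

lemma IsT2Set.not_frequently_frontier_mem_sector {N : Set E2} {r u σ : ℝ}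
    (hN : IsT2Set N r u) (hr : 0 < r) (hu : 0 < u) :
    ¬ ∃ᶠ p in 𝓝 0, p ∈ sector σ (2 * u) ∧ p ∈ frontier N := fun hfr => by
  obtain ⟨p, ⟨hps, hpfr⟩, hpr⟩ := (hfr.and_eventually (eventually_coord_lt hr)).exists
  have hopen : IsOpen (sector σ (2 * u) ∩ {p | p 0 < r}) :=
    (isOpen_sector σ _).inter (isOpen_lt (by fun_prop) continuous_const)
  exact hpfr.2 (interior_maximal ((sector_inter_subset_coneSet (by positivity)).trans hN) hopen
    ⟨hps, hpr⟩)

lemma IsTT3Set.not_frequently_frontier_mem_sector {N : Set E2} {r u σ : ℝ}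
    (hN : IsTT3Set N r u) (hr : 0 < r) (hu : 0 < u) (hσ : 0 < σ) :
    ¬ ∃ᶠ p in 𝓝 0, p ∈ sector σ (2 * u) ∧ p ∈ frontier N := fun hfr => by
  obtain ⟨p, ⟨hps, hpfr⟩, hpr, hflat⟩ :=
    (hfr.and_eventually ((eventually_coord_lt hr).and (hN.eventually_abs_le hr hσ))).exists
  have := hflat hpfr (sector_inter_subset_coneSet (by positivity) ⟨hps, hpr⟩)
  exact (hps.1.trans_le this).false

lemma mem_posTangentConeAt_of_ofTypeTT3 {M : Set E2} {x v : E2} (hv : ‖v‖ = 1)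
    (hx : x ∈ frontier M) (h : OfTypeTT3 M x v) : v ∈ posTangentConeAt (frontier M) x := by
  obtain ⟨r, u, hr, -, hN⟩ := h
  obtain ⟨n, f, hf, hcover⟩ := hN.exists_tangent_graphs hr
  have h0 : (0 : E2) ∈ frontier (gammaMap x v ⁻¹' M) := by
    rw [frontier_preimage_gammaMap hv]
    simpa [gammaMap] using hx
  obtain ⟨i, hi, -⟩ := mem_iUnion₂.mp (hcover ⟨h0, zero_mem_coneSet hr⟩)
  obtain ⟨hf0, hderiv, hgraph⟩ := hf i hi
  have hcurve : HasDerivWithinAt (fun t => x + (t • v + f i t • rot90 v)) v (Ici 0) 0 := by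
    simpa using (((hasDerivWithinAt_id 0 _).smul_const v).add
      (hderiv.smul_const (rot90 v))).const_add x
  have hfrontier : ∀ᶠ t in 𝓝[>] 0, x + (t • v + f i t • rot90 v) ∈ frontier M := by
    filter_upwards [Ioo_mem_nhdsGT hr] with t ht
    have := hgraph ⟨t, Ioo_subset_Ico_self ht, rfl⟩
    rw [frontier_preimage_gammaMap hv] at this
    simpa [gammaMap, add_assoc] using this
  simpa [hf0] using mem_posTangentConeAt_of_hasDerivWithinAt hcurve hfrontier

lemma frequently_frontier_mem_sector {M : Set E2} {x v v₀ : E2} {κ : ℝ} (hκ : 0 < κ)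
    (hv : ‖v‖ = 1) (hv₀ : ‖v₀‖ = 1) (hne : v ≠ v₀) (hvκ : |⟪v, rot90 v₀⟫| < κ * ⟪v, v₀⟫)
    (htan : v ∈ posTangentConeAt (frontier M) x) :
    ∃ σ > 0, ∃ᶠ p in 𝓝 0, p ∈ sector σ κ ∧ p ∈ frontier (gammaMap x v₀ ⁻¹' M) := by
  have ha : 0 < ⟪v, v₀⟫ := pos_of_mul_pos_right ((abs_nonneg _).trans_lt hvκ) hκ.le
  have hb : ⟪v, rot90 v₀⟫ ≠ 0 := fun hb => hne (eq_of_inner_rot90_eq_zero hv hv₀ hb ha)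
  obtain ⟨σ, hσ, hvσ⟩ : ∃ σ > 0, σ * ⟪v, v₀⟫ < |⟪v, rot90 v₀⟫| := by
    refine ⟨|⟪v, rot90 v₀⟫| / (2 * ⟪v, v₀⟫), by positivity, ?_⟩
    rw [div_mul_eq_mul_div, mul_div_mul_right _ _ ha.ne']
    linarith [abs_pos.mpr hb]
  have hvK : frameCoords v₀ v ∈ sector σ κ := ⟨hvσ, hvκ⟩
  refine ⟨σ, hσ, ?_⟩
  have hK := frequently_mem_of_mem_posTangentConeAt htan
    ((isOpen_sector _ _).preimage (continuous_frameCoords v₀)) hvK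
    fun c d hcd => mem_sector_of_smul_mem c.2 (by rwa [NNReal.smul_def, mem_preimage,
      frameCoords_smul] at hcd)
  refine ((continuous_frameCoords v₀).tendsto' 0 0 ?_).frequently
    (hK.mono fun d ⟨hd, hdM⟩ => ⟨hd, ?_⟩)
  · exact ext_fin_two (by simp) (by simp)
  · rw [frontier_preimage_gammaMap hv₀, mem_preimage, gammaMap_frameCoords hv₀]
    exact hdM

lemma eventually_notMem_posTangentConeAt {M : Set E2} (hM : IsClosed M) {x v₀ : E2}
    (hv₀ : ‖v₀‖ = 1) (htype : OfTypeTT1 M x v₀ ∨ OfTypeTT2 M x v₀ ∨ OfTypeTT3 M x v₀) :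
    ∀ᶠ v in 𝓝[≠] v₀, ‖v‖ = 1 → v ∉ posTangentConeAt (frontier M) x := by
  set N := gammaMap x v₀ ⁻¹' M
  obtain ⟨r, u, hr, hu, hN⟩ : ∃ r u : ℝ, 0 < r ∧ 0 < u ∧
      (IsT1Set N r u ∨ IsT2Set N r u ∨ IsTT3Set N r u) := by
    rcases htype with ⟨r, u, hr, hu, h⟩ | ⟨r, u, hr, hu, h⟩ | ⟨r, u, hr, hu, h⟩
    exacts [⟨r, u, hr, hu, .inl h⟩, ⟨r, u, hr, hu, .inr (.inl h)⟩, ⟨r, u, hr, hu, .inr (.inr h)⟩]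
  have hU : IsOpen {v : E2 | |⟪v, rot90 v₀⟫| < 2 * u * ⟪v, v₀⟫} :=
    isOpen_lt (by fun_prop) (by fun_prop)
  have hv₀U : |⟪v₀, rot90 v₀⟫| < 2 * u * ⟪v₀, v₀⟫ := by
    rw [inner_rot90_self, real_inner_self_eq_norm_sq, hv₀]
    simpa using hu
  filter_upwards [nhdsWithin_le_nhds (hU.mem_nhds hv₀U), self_mem_nhdsWithin]
    with v hvU (hne : v ≠ v₀) hv htan
  obtain ⟨σ, hσ, hfr⟩ := frequently_frontier_mem_sector (by positivity) hv hv₀ hne hvU htan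
  rcases hN with hN | hN | hN
  · exact hN.not_frequently_frontier_mem_sector (hM.preimage (continuous_gammaMap x v₀)) hr hu hfr
  · exact hN.not_frequently_frontier_mem_sector hr hu hfr
  · exact hN.not_frequently_frontier_mem_sector hr hu hσ hfr

theorem finitely_many_T3_directions_general
    (M : Set (EuclideanSpace ℝ (Fin 2))) (hMcl : IsClosed M)
    (x : EuclideanSpace ℝ (Fin 2)) (hxbd : x ∈ frontier M)
    (h : ∀ v : EuclideanSpace ℝ (Fin 2), ‖v‖ = 1 →
      OfTypeTT1 M x v ∨ OfTypeTT2 M x v ∨ OfTypeTT3 M x v) :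
    {v : EuclideanSpace ℝ (Fin 2) | ‖v‖ = 1 ∧ OfTypeTT3 M x v}.Finite := by
  have hcodiscrete : (posTangentConeAt (frontier M) x)ᶜ ∈ codiscreteWithin (Metric.sphere 0 1) := by
    refine mem_codiscreteWithin_iff_forall_mem_nhdsNE.mpr fun v₀ hv₀ => ?_
    rw [mem_sphere_zero_iff_norm] at hv₀
    filter_upwards [eventually_notMem_posTangentConeAt hMcl hv₀ (h v₀ hv₀)] with v hv
    by_cases hv1 : ‖v‖ = 1
    · exact .inl (hv hv1)
    · exact .inr (by simpa using hv1)
  refine ((isCompact_sphere 0 1).finite_sdiff_of_mem_codiscreteWithin hcodiscrete).subset ?_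
  rintro v ⟨hv, hT3⟩
  exact ⟨by simpa using hv, by simpa using mem_posTangentConeAt_of_ofTypeTT3 hv hxbd hT3⟩

/-- Let `M ⊆ ℝ²` be closed and `x ∈ M ∩ ∂M`.  If for every unit vector
`v` the set `M` is of type `𝒯¹`, `𝒯²` or `𝒯³` at `x` in direction `v`, then the set of unit
vectors `v` for which `M` is of type `𝒯³` at `x` in direction `v` is finite. -/
theorem finitely_many_T3_directions
    (M : Set (EuclideanSpace ℝ (Fin 2))) (hMcl : IsClosed M)
    (x : EuclideanSpace ℝ (Fin 2)) (hxM : x ∈ M) (hxbd : x ∈ frontier M)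
    (h : ∀ v : EuclideanSpace ℝ (Fin 2), ‖v‖ = 1 →
      OfTypeTT1 M x v ∨ OfTypeTT2 M x v ∨ OfTypeTT3 M x v) :
    {v : EuclideanSpace ℝ (Fin 2) | ‖v‖ = 1 ∧ OfTypeTT3 M x v}.Finite :=
  finitely_many_T3_directions_general M hMcl x hxbd h
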